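/- Let n ≥ 2 and let x_1,…,x_n : ℝ → ℝ be functions, each differentiable at 0, whose values x_1(0),…,x_n(0) are pairwise distinct and strictly positive. Fix q with 2 ≤ q ≤ n and suppose that for all t in a neighbourhood of 0 the elementary symmetric polynomials satisfy e_j(x(t)) = e_j(x(0)) for every j ∈ {1,…,n} with j ≠ q, while e_q(x(t)) = e_q(x(0)) + t. Then the function t ↦ −∑_{k=1}^n x_k(t)·ln(x_k(t)) is differentiable at 0 with derivative equal to (−1)^q · ∑_{k=1}^n (x_k(0)^{n−q} · ln x_k(0)) / P_k, where P_k = ∏_{i≠k}(x_k(0) − x_i(0)). (This is the formula ∂S/∂s_q = (−1)^q Σ_k x_k^{n−q} ln x_k / ∏_{i≠k}(x_k − x_i) for the Shannon entropy as a function of the elementary symmetric polynomials.) -/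

import Mathlib

/-- The `j`-th elementary symmetric polynomial of `x : Fin n → ℝ`. -/
noncomputable def esymm (n j : ℕ) (x : Fin n → ℝ) : ℝ :=
  ∑ s ∈ Finset.powersetCard j (Finset.univ : Finset (Fin n)), ∏ u ∈ s, x u

/-! Only `e_q` moves, so by Vieta the polynomial `∏ₖ (y - xₖ(t))` changes by `(-1)^q y^(n-q) t`.
Differentiating at `t = 0` and evaluating at `y = xₖ(0)` kills all terms but one:
`xₖ'(0) ∏_{i≠k} (xₖ - xᵢ) = -(-1)^q xₖ^(n-q)`. As `e₁ = ∑ₖ xₖ` is fixed, `∑ₖ xₖ'(0) = 0`, so the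
derivative `-∑ₖ xₖ'(0) (ln xₖ + 1)` of the entropy is `-∑ₖ xₖ'(0) ln xₖ`. -/

open Finset

lemma prod_sub_eq_sum_esymm {n : ℕ} (x : Fin n → ℝ) (y : ℝ) :
    ∏ k, (y - x k) = ∑ j ∈ range (n + 1), (-1) ^ j * esymm n j x * y ^ (n - j) := by
  have h := congrArg (Polynomial.eval y)
    (Multiset.prod_X_sub_X_eq_sum_esymm (univ.val.map x))
  rw [Multiset.card_map, card_val, card_univ, Fintype.card_fin, Polynomial.eval_multiset_prod,
    Multiset.map_map, Multiset.map_map, Polynomial.eval_finsetSum] at h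
  simp only [Function.comp_apply, Polynomial.eval_sub, Polynomial.eval_X, Polynomial.eval_C,
    Polynomial.eval_mul, Polynomial.eval_pow, Polynomial.eval_neg, Polynomial.eval_one,
    esymm_map_val] at h
  simpa only [esymm, mul_assoc, prod_map_val] using h

lemma esymm_zero {n : ℕ} (x : Fin n → ℝ) : esymm n 0 x = 1 := by
  simp [esymm]

lemma esymm_one {n : ℕ} (x : Fin n → ℝ) : esymm n 1 x = ∑ k, x k := by
  simp [esymm, powersetCard_one]

lemma prod_sub_eq_add_of_esymm {n q : ℕ} (hq : q ≤ n) {a b : Fin n → ℝ} {t : ℝ}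
    (hfix : ∀ j, 1 ≤ j → j ≤ n → j ≠ q → esymm n j b = esymm n j a)
    (hvar : esymm n q b = esymm n q a + t) (y : ℝ) :
    ∏ k, (y - b k) = ∏ k, (y - a k) + (-1) ^ q * y ^ (n - q) * t := by
  rw [prod_sub_eq_sum_esymm, prod_sub_eq_sum_esymm, ← sub_eq_iff_eq_add', ← sum_sub_distrib,
    sum_eq_single_of_mem q (mem_range.2 (Nat.lt_succ_of_le hq)), hvar]
  · ring
  intro j hj hjq
  obtain rfl | hj0 := Nat.eq_zero_or_pos j
  · simp only [esymm_zero, sub_self]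
  · rw [hfix j hj0 (Nat.le_of_lt_succ (mem_range.1 hj)) hjq, sub_self]

lemma sum_mul_prod_erase_sub_self {ι : Type*} [Fintype ι] [DecidableEq ι] (c a : ι → ℝ) (k : ι) :
    ∑ l, c l * ∏ i ∈ univ.erase l, (a k - a i) = c k * ∏ i ∈ univ.erase k, (a k - a i) := by
  refine sum_eq_single_of_mem k (mem_univ k) fun l _ hlk => ?_
  rw [prod_eq_zero (mem_erase.2 ⟨Ne.symm hlk, mem_univ k⟩) (sub_self _), mul_zero]

lemma hasDerivAt_prod_sub {ι : Type*} [Fintype ι] [DecidableEq ι] {x : ι → ℝ → ℝ} {d : ι → ℝ}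
    {t₀ : ℝ} (hd : ∀ k, HasDerivAt (x k) (d k) t₀) (y : ℝ) :
    HasDerivAt (fun t => ∏ k, (y - x k t)) (-∑ k, d k * ∏ i ∈ univ.erase k, (y - x i t₀)) t₀ := by
  refine (HasDerivAt.fun_finsetProd fun k (_ : k ∈ univ) => (hd k).const_sub y).congr_deriv ?_
  rw [← sum_neg_distrib]
  exact sum_congr rfl fun k _ => by rw [smul_eq_mul]; ring

lemma hasDerivAt_neg_sum_mul_log {ι : Type*} [Fintype ι] {x : ι → ℝ → ℝ} {d : ι → ℝ}
    {t₀ : ℝ} (hd : ∀ k, HasDerivAt (x k) (d k) t₀) (hpos : ∀ k, 0 < x k t₀) :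
    HasDerivAt (fun t => -∑ k, x k t * Real.log (x k t))
      (-∑ k, d k * Real.log (x k t₀) - ∑ k, d k) t₀ := by
  have h := HasDerivAt.fun_sum fun k (_ : k ∈ univ) =>
    (Real.hasDerivAt_negMulLog (hpos k).ne').comp t₀ (hd k)
  simp only [Function.comp_def, Real.negMulLog, neg_mul, sum_neg_distrib] at h
  refine h.congr_deriv ?_
  rw [← sum_neg_distrib, ← sum_sub_distrib]
  exact sum_congr rfl fun k _ => by ring

section

variable {n q : ℕ} {x : Fin n → ℝ → ℝ} {d : Fin n → ℝ}

theorem deriv_root_eq_of_esymm (hq : q ≤ n) (hd : ∀ k, HasDerivAt (x k) (d k) 0)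
    (hdist : ∀ k l, k ≠ l → x k 0 ≠ x l 0)
    (hfix : ∀ᶠ t in nhds (0 : ℝ), ∀ j, 1 ≤ j → j ≤ n → j ≠ q →
      esymm n j (fun k => x k t) = esymm n j (fun k => x k 0))
    (hvar : ∀ᶠ t in nhds (0 : ℝ),
      esymm n q (fun k => x k t) = esymm n q (fun k => x k 0) + t) (k : Fin n) :
    d k = -(-1) ^ q * x k 0 ^ (n - q) / ∏ i ∈ univ.erase k, (x k 0 - x i 0) := by
  have hP : ∏ i ∈ univ.erase k, (x k 0 - x i 0) ≠ 0 :=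
    prod_ne_zero_iff.2 fun i hi => sub_ne_zero.2 (hdist k i (mem_erase.1 hi).1.symm)
  have hline : HasDerivAt (fun t => ∏ i, (x k 0 - x i t)) ((-1) ^ q * x k 0 ^ (n - q)) 0 := by
    refine ((hasDerivAt_const_mul ((-1 : ℝ) ^ q * x k 0 ^ (n - q))).const_add
      (∏ i, (x k 0 - x i 0))).congr_of_eventuallyEq ?_
    filter_upwards [hfix, hvar] with t hft hvt
    rw [prod_sub_eq_add_of_esymm hq hft hvt]
  have h := (hasDerivAt_prod_sub hd (x k 0)).unique hline
  rw [sum_mul_prod_erase_sub_self d (fun i => x i 0)] at h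
  rw [eq_div_iff hP]
  linarith

theorem sum_deriv_eq_zero_of_esymm_one {t₀ : ℝ} (hd : ∀ k, HasDerivAt (x k) (d k) t₀)
    (h : ∀ᶠ t in nhds t₀, esymm n 1 (fun k => x k t) = esymm n 1 (fun k => x k t₀)) :
    ∑ k, d k = 0 := by
  refine (HasDerivAt.fun_sum fun k (_ : k ∈ univ) => hd k).unique ?_
  refine (hasDerivAt_const t₀ (∑ k, x k t₀)).congr_of_eventuallyEq ?_
  filter_upwards [h] with t ht
  simpa only [esymm_one] using ht

end

theorem stmt_18_general (n : ℕ) (x : Fin n → ℝ → ℝ)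
    (hdiff : ∀ k, DifferentiableAt ℝ (x k) 0)
    (hdist : ∀ k l, k ≠ l → x k 0 ≠ x l 0)
    (hpos : ∀ k, 0 < x k 0)
    (q : ℕ) (hq2 : 2 ≤ q) (hqn : q ≤ n)
    (hfix : ∀ᶠ t in nhds (0 : ℝ), ∀ j, 1 ≤ j → j ≤ n → j ≠ q →
      esymm n j (fun k => x k t) = esymm n j (fun k => x k 0))
    (hvar : ∀ᶠ t in nhds (0 : ℝ),
      esymm n q (fun k => x k t) = esymm n q (fun k => x k 0) + t) :
    HasDerivAt (fun t => -∑ k, x k t * Real.log (x k t))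
      ((-1 : ℝ) ^ q * ∑ k, (x k 0) ^ (n - q) * Real.log (x k 0) /
        ∏ i ∈ Finset.univ.erase k, (x k 0 - x i 0)) 0 := by
  have hd k := (hdiff k).hasDerivAt
  convert hasDerivAt_neg_sum_mul_log hd hpos using 1
  have hsum : ∑ k, deriv (x k) 0 = 0 :=
    sum_deriv_eq_zero_of_esymm_one hd (hfix.mono fun t ht => ht 1 le_rfl (by omega) (by omega))
  rw [hsum, sub_zero, mul_sum, ← sum_neg_distrib]
  refine sum_congr rfl fun k _ => ?_
  rw [deriv_root_eq_of_esymm hqn hd hdist hfix hvar k]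
  ring

/-- The formula `∂S/∂s_q = (−1)^q ∑_k x_k^{n−q} ln x_k / ∏_{i≠k}(x_k − x_i)` for the
Shannon entropy viewed as a function of the elementary symmetric polynomials. -/
theorem stmt_18 (n : ℕ) (hn : 2 ≤ n) (x : Fin n → ℝ → ℝ)
    (hdiff : ∀ k, DifferentiableAt ℝ (x k) 0)
    (hdist : ∀ k l, k ≠ l → x k 0 ≠ x l 0)
    (hpos : ∀ k, 0 < x k 0)
    (q : ℕ) (hq2 : 2 ≤ q) (hqn : q ≤ n)
    (hfix : ∀ᶠ t in nhds (0 : ℝ), ∀ j, 1 ≤ j → j ≤ n → j ≠ q →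
      esymm n j (fun k => x k t) = esymm n j (fun k => x k 0))
    (hvar : ∀ᶠ t in nhds (0 : ℝ),
      esymm n q (fun k => x k t) = esymm n q (fun k => x k 0) + t) :
    HasDerivAt (fun t => -∑ k, x k t * Real.log (x k t))
      ((-1 : ℝ) ^ q * ∑ k, (x k 0) ^ (n - q) * Real.log (x k 0) /
        ∏ i ∈ Finset.univ.erase k, (x k 0 - x i 0)) 0 :=
  stmt_18_general n x hdiff hdist hpos q hq2 hqn hfix hvar
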